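/- Let T be a finite tree on n vertices. Then k(T) = 2 if and only if T is a star K_{1,t} with t ≥ 2 leaves, or a balanced double star. -/

import Mathlib

/-!
In a tree, along every path `a - b - c` the distance from any vertex `w` satisfies
`2 d(w,b) ≤ d(w,a) + d(w,c)`, because distances to adjacent vertices differ by exactly one and
`b` has only one neighbour closer to `w`; at `w = b` the inequality is strict. Summing, the status is strictly convex: `2 s(b) < s(a) + s(c)`.
If the status takes only two values, two adjacent vertices of degree `≥ 2` therefore get the
same status, and so no vertex has two distinct neighbours of degree `≥ 2`. The vertices of
degree `≥ 2` then form a single vertex or an edge, and every other vertex is a leaf hanging on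
them: the tree is a star or a double star. For a centre `c` within distance two of everything,
`s(c) + deg c = 2(n - 1)`, so equal statuses of the two centres mean equal degrees.
Conversely a leaf on `c` has status `s(c) + n - 2`, so stars and balanced double stars take
exactly the two values `s(c)` and `s(c) + n - 2`.
-/

/-- The status (transmission index) of a vertex: the sum of distances to all vertices. -/
noncomputable def SimpleGraph.status {V : Type*} [Fintype V] (G : SimpleGraph V) (v : V) : ℕ :=
  ∑ u : V, G.dist v u

/-- `k(G)`: the number of distinct status values among the vertices of `G`. -/
noncomputable def SimpleGraph.numStatusValues {V : Type*} [Fintype V] (G : SimpleGraph V) : ℕ :=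
  (Finset.univ.image G.status).card

/-- `G` is a star `K_{1,t}` with `t ≥ 2` leaves: there is a center adjacent to every other
vertex, these being the only edges, and there are at least two leaves. -/
def SimpleGraph.IsStarWithAtLeastTwoLeaves {V : Type*} [Fintype V] (G : SimpleGraph V) : Prop :=
  3 ≤ Fintype.card V ∧
    ∃ c : V, ∀ u v : V, G.Adj u v ↔ (u = c ∧ v ≠ c) ∨ (v = c ∧ u ≠ c)

/-- `G` is a balanced double star: two adjacent centers, each with `a ≥ 1` pendant
(degree-one) neighbors, and the same number of pendant neighbors on each center. -/
def SimpleGraph.IsBalancedDoubleStar {V : Type*} [Fintype V] (G : SimpleGraph V)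
    [DecidableRel G.Adj] : Prop :=
  ∃ c₁ c₂ : V, c₁ ≠ c₂ ∧ G.Adj c₁ c₂ ∧
    (∀ v : V, v ≠ c₁ → v ≠ c₂ →
      ((G.Adj c₁ v ∧ ¬ G.Adj c₂ v) ∨ (G.Adj c₂ v ∧ ¬ G.Adj c₁ v)) ∧ G.degree v = 1) ∧
    G.degree c₁ = G.degree c₂ ∧ 2 ≤ G.degree c₁


theorem Finset.card_image_univ_eq_two_iff {α β : Type*} [Fintype α] [DecidableEq β] (f : α → β) :
    (Finset.univ.image f).card = 2 ↔ ∃ a b, a ≠ b ∧ Set.range f = {a, b} := by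
  simp only [Finset.card_eq_two, ← Finset.coe_inj, Finset.coe_image, Finset.coe_univ,
    Set.image_univ, Finset.coe_pair]

namespace SimpleGraph

variable {V : Type*} {G : SimpleGraph V}

theorem dist_le_two_of_forall_adj_or_adj {c₁ c₂ : V} (h12 : G.Adj c₁ c₂)
    (h : ∀ w, w ≠ c₁ → w ≠ c₂ → G.Adj c₁ w ∨ G.Adj c₂ w) (w : V) : G.dist c₁ w ≤ 2 := by
  by_cases hw₁ : w = c₁
  · simp [hw₁]
  by_cases hw₂ : w = c₂
  · rw [hw₂, dist_eq_one_iff_adj.2 h12]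
    omega
  rcases h w hw₁ hw₂ with h' | h'
  · rw [dist_eq_one_iff_adj.2 h']
    omega
  · exact G.dist_le (.cons h12 (.cons h' .nil))

theorem Connected.dist_eq_dist_add_one_of_forall_adj_eq (hG : G.Connected) {l b w : V}
    (hb : G.Adj l b) (hl : ∀ x, G.Adj l x → x = b) (hw : w ≠ l) :
    G.dist l w = G.dist b w + 1 := by
  obtain ⟨p, hp⟩ := hG.exists_walk_length_eq_dist l w
  have hle : G.dist l w ≤ G.dist l b + G.dist b w := hG.dist_triangle
  rw [dist_eq_one_iff_adj.2 hb] at hle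
  cases p with
  | nil => exact absurd rfl hw
  | cons h q =>
    obtain rfl := hl _ h
    have := G.dist_le q
    rw [Walk.length_cons] at hp
    omega

theorem IsTree.dist_eq_add_one_or_of_adj (hT : G.IsTree) {u v : V} (h : G.Adj u v) (w : V) :
    G.dist w v = G.dist w u + 1 ∨ G.dist w u = G.dist w v + 1 := by
  obtain ⟨p, hp, hpl⟩ := hT.connected.exists_path_of_dist w u
  obtain ⟨q, hq, hql⟩ := hT.connected.exists_path_of_dist w v
  by_cases hv : v ∈ p.support
  · right
    rw [← hpl, ← hql, hT.isAcyclic.path_concat hq hp h.symm hv, Walk.length_concat]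
  · left
    have hu := hT.isAcyclic.mem_support_of_ne_mem_support_of_adj_of_isPath hq hp h.symm hv
    rw [← hpl, ← hql, hT.isAcyclic.path_concat hp hq h hu, Walk.length_concat]

theorem IsTree.mem_support_of_adj_of_dist_lt (hT : G.IsTree) {w a b : V} (hab : G.Adj a b)
    (hlt : G.dist w a < G.dist w b) {p : G.Walk w b} (hp : p.IsPath) : a ∈ p.support := by
  classical
  obtain ⟨q, hq, hql⟩ := hT.connected.exists_path_of_dist w a
  refine hT.isAcyclic.mem_support_of_ne_mem_support_of_adj_of_isPath hp hq hab.symm fun hb => ?_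
  have := G.dist_le (q.takeUntil b hb)
  have := q.length_takeUntil_le_length hb
  omega

theorem IsTree.two_mul_dist_le (hT : G.IsTree) {a b c : V} (hab : G.Adj a b) (hbc : G.Adj b c)
    (hac : a ≠ c) (w : V) : 2 * G.dist w b ≤ G.dist w a + G.dist w c := by
  rcases hT.dist_eq_add_one_or_of_adj hab w with ha | ha <;>
    rcases hT.dist_eq_add_one_or_of_adj hbc w with hc | hc <;> try omega
  -- Left: `a` and `c` are both closer to `w` than `b`, so each is the penultimate vertex
  -- of the path from `w` to `b`.
  obtain ⟨p, hp, -⟩ := hT.connected.exists_path_of_dist w b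
  have ha' := hT.isAcyclic.eq_penultimate_of_adj_end hp hab.symm
    (hT.mem_support_of_adj_of_dist_lt hab (by omega) hp)
  have hc' := hT.isAcyclic.eq_penultimate_of_adj_end hp hbc
    (hT.mem_support_of_adj_of_dist_lt hbc.symm (by omega) hp)
  exact absurd (ha'.trans hc'.symm) hac

variable [Fintype V]

theorem three_le_card_of_status_ne {u v : V} (h : G.status u ≠ G.status v) :
    3 ≤ Fintype.card V := by
  classical
  by_contra! h3
  have huv : u ≠ v := fun e => h (e ▸ rfl)
  have huniv : ({u, v} : Finset V) = Finset.univ := by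
    refine Finset.eq_univ_of_card _ ?_
    have := Finset.card_le_univ ({u, v} : Finset V)
    rw [Finset.card_pair huv] at this ⊢
    omega
  apply h
  rw [status, status, ← huniv, Finset.sum_pair huv, Finset.sum_pair huv, dist_self, dist_self,
    G.dist_comm, add_comm]

theorem IsTree.two_mul_status_lt (hT : G.IsTree) {a b c : V} (hab : G.Adj a b) (hbc : G.Adj b c)
    (hac : a ≠ c) : 2 * G.status b < G.status a + G.status c := by
  simp only [status, Finset.mul_sum, ← Finset.sum_add_distrib]
  refine Finset.sum_lt_sum (fun w _ => ?_) ⟨b, Finset.mem_univ _, ?_⟩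
  · simpa only [G.dist_comm (v := w)] using hT.two_mul_dist_le hab hbc hac w
  · simp [dist_eq_one_iff_adj.2 hab, dist_eq_one_iff_adj.2 hbc.symm]

theorem Connected.status_add_two_of_forall_adj_eq (hG : G.Connected) {l b : V} (hb : G.Adj l b)
    (hl : ∀ x, G.Adj l x → x = b) : G.status l + 2 = G.status b + Fintype.card V := by
  classical
  have key : ∀ w, G.dist l w + (if w = l then 2 else 0) = G.dist b w + 1 := by
    intro w
    split_ifs with hw
    · simp [hw, dist_eq_one_iff_adj.2 hb.symm]
    · simp [hG.dist_eq_dist_add_one_of_forall_adj_eq hb hl hw]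
  have := Finset.sum_congr rfl fun w (_ : w ∈ Finset.univ) => key w
  simpa [Finset.sum_add_distrib, status] using this

theorem Connected.numStatusValues_eq_two (hG : G.Connected) (h3 : 3 ≤ Fintype.card V)
    (P : V → Prop) {c l : V} (hl : ¬P l) (hP : ∀ v, P v → G.status v = G.status c)
    (hleaf : ∀ v, ¬P v → ∃ b, P b ∧ G.Adj v b ∧ ∀ x, G.Adj v x → x = b) :
    G.numStatusValues = 2 := by
  have hleaf' : ∀ v, ¬P v → G.status v + 2 = G.status c + Fintype.card V := fun v hv => by
    obtain ⟨b, hb, hvb, hu⟩ := hleaf v hv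
    rw [hG.status_add_two_of_forall_adj_eq hvb hu, hP b hb]
  have hl' := hleaf' l hl
  rw [numStatusValues, Finset.card_image_univ_eq_two_iff]
  refine ⟨G.status c, G.status l, by omega, ?_⟩
  refine Set.Subset.antisymm ?_ (by simp [Set.insert_subset_iff])
  rintro _ ⟨v, rfl⟩
  by_cases hv : P v
  · exact Or.inl (hP v hv)
  · have := hleaf' v hv
    exact Or.inr (Set.mem_singleton_iff.2 (by omega))

theorem IsStarWithAtLeastTwoLeaves.numStatusValues_eq_two (hS : G.IsStarWithAtLeastTwoLeaves)
    (hG : G.Connected) : G.numStatusValues = 2 := by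
  obtain ⟨h3, c, hc⟩ := hS
  obtain ⟨l, hl⟩ := Fintype.exists_ne_of_one_lt_card (by omega) c
  refine hG.numStatusValues_eq_two h3 (· = c) hl (fun v hv => congrArg G.status hv) fun v hv =>
    ⟨c, rfl, (hc v c).2 (Or.inr ⟨rfl, hv⟩), fun x hx => ?_⟩
  rcases (hc v x).1 hx with h | h
  exacts [absurd h.1 hv, h.1]

section Degree

variable [DecidableRel G.Adj]

theorem two_le_degree_of_adj_of_adj {v a b : V} (ha : G.Adj v a) (hb : G.Adj v b) (hab : a ≠ b) :
    2 ≤ G.degree v := by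
  classical
  rw [← card_neighborFinset_eq_degree, ← Finset.card_pair hab]
  exact Finset.card_le_card (by simp [Finset.insert_subset_iff, ha, hb])

theorem exists_adj_ne_of_two_le_degree {v : V} (hv : 2 ≤ G.degree v) (a : V) :
    ∃ x, G.Adj v x ∧ x ≠ a := by
  obtain ⟨x, hx, hxa⟩ := Finset.exists_mem_ne (s := G.neighborFinset v)
    (by rw [card_neighborFinset_eq_degree]; omega) a
  exact ⟨x, (G.mem_neighborFinset v x).1 hx, hxa⟩

theorem Walk.IsPath.two_le_degree_getVert {u v : V} {p : G.Walk u v} (hp : p.IsPath) {i : ℕ}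
    (hi₀ : 0 < i) (hi : i < p.length) :
    2 ≤ G.degree (p.getVert i) := by
  obtain ⟨j, rfl⟩ : ∃ j, i = j + 1 := ⟨i - 1, by omega⟩
  refine two_le_degree_of_adj_of_adj (p.adj_getVert_succ (by omega)).symm
    (p.adj_getVert_succ hi) fun h => ?_
  have := hp.getVert_injOn (by simp only [Set.mem_ofPred_eq]; omega)
    (by simp only [Set.mem_ofPred_eq]; omega) h
  omega

theorem Connected.status_add_degree_add_two (hG : G.Connected) {c : V}
    (hc : ∀ w, G.dist c w ≤ 2) : G.status c + G.degree c + 2 = 2 * Fintype.card V := by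
  classical
  have key : ∀ w, G.dist c w + (if G.Adj c w then 1 else 0) + (if w = c then 2 else 0) = 2 := by
    intro w
    have := hc w
    split_ifs with ha hw hw
    · exact absurd (hw ▸ ha) (G.irrefl)
    · rw [dist_eq_one_iff_adj.2 ha]
    · simp [hw]
    · have := hG.pos_dist_of_ne (Ne.symm hw)
      have := mt dist_eq_one_iff_adj.1 ha
      omega
  have := Finset.sum_congr rfl fun w (_ : w ∈ Finset.univ) => key w
  simpa [Finset.sum_add_distrib, Finset.sum_boole, status, ← neighborFinset_eq_filter,
    mul_comm] using this

theorem IsBalancedDoubleStar.numStatusValues_eq_two (hS : G.IsBalancedDoubleStar)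
    (hG : G.Connected) : G.numStatusValues = 2 := by
  obtain ⟨c₁, c₂, hne, h12, hleaf, hdeg, h₁⟩ := hS
  obtain ⟨l, hl, hl₂⟩ := exists_adj_ne_of_two_le_degree h₁ c₂
  have hside : ∀ w, w ≠ c₁ → w ≠ c₂ → G.Adj c₁ w ∨ G.Adj c₂ w :=
    fun w hw₁ hw₂ => (hleaf w hw₁ hw₂).1.imp And.left And.left
  have e₁ := hG.status_add_degree_add_two (dist_le_two_of_forall_adj_or_adj h12 hside)
  have e₂ := hG.status_add_degree_add_two
    (dist_le_two_of_forall_adj_or_adj h12.symm fun w hw₂ hw₁ => (hside w hw₁ hw₂).symm)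
  have h3 : 3 ≤ Fintype.card V := by
    classical
    have := Finset.card_le_univ ({c₁, c₂, l} : Finset V)
    rwa [Finset.card_eq_three.2 ⟨c₁, c₂, l, hne, hl.ne, Ne.symm hl₂, rfl⟩] at this
  refine hG.numStatusValues_eq_two h3 (fun v => v = c₁ ∨ v = c₂) (c := c₁) (l := l)
    (by simp [hl.ne', hl₂]) (by rintro v (rfl | rfl) <;> omega) fun v hv => ?_
  push Not at hv
  obtain ⟨hadj, hv₁⟩ := hleaf v hv.1 hv.2
  have huniq := degree_eq_one_iff_existsUnique_adj.1 hv₁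
  rcases hadj with ⟨h, -⟩ | ⟨h, -⟩
  exacts [⟨c₁, Or.inl rfl, h.symm, fun x hx => huniq.unique hx h.symm⟩,
    ⟨c₂, Or.inr rfl, h.symm, fun x hx => huniq.unique hx h.symm⟩]

theorem IsTree.status_eq_of_adj_of_two_le_degree {A B : ℕ} (hT : G.IsTree)
    (hs : ∀ v, G.status v = A ∨ G.status v = B) {a b : V} (hab : G.Adj a b)
    (ha : 2 ≤ G.degree a) (hb : 2 ≤ G.degree b) : G.status a = G.status b := by
  obtain ⟨x, hx, hxb⟩ := exists_adj_ne_of_two_le_degree ha b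
  obtain ⟨y, hy, hya⟩ := exists_adj_ne_of_two_le_degree hb a
  have hxab := hT.two_mul_status_lt hx.symm hab hxb
  have haby := hT.two_mul_status_lt hab hy hya.symm
  -- By strict convexity along `x - a - b` and `a - b - y`, neither `a` nor `b` alone can carry
  -- the larger of the two values.
  rcases hs a with h | h <;> rcases hs b with h' | h' <;> rcases hs x with h'' | h'' <;>
    rcases hs y with h''' | h''' <;> omega

theorem IsTree.degree_le_one_or_of_adj_of_adj {A B : ℕ} (hT : G.IsTree)
    (hs : ∀ v, G.status v = A ∨ G.status v = B) {a b c : V} (hab : G.Adj a b) (hbc : G.Adj b c)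
    (hac : a ≠ c) : G.degree a ≤ 1 ∨ G.degree c ≤ 1 := by
  by_contra! h
  have hb := two_le_degree_of_adj_of_adj hab.symm hbc hac
  have := hT.two_mul_status_lt hab hbc hac
  rw [hT.status_eq_of_adj_of_two_le_degree hs hab h.1 hb,
    ← hT.status_eq_of_adj_of_two_le_degree hs hbc hb h.2] at this
  omega

theorem Connected.two_le_degree_or_exists_adj (hG : G.Connected) (h3 : 3 ≤ Fintype.card V)
    (v : V) : 2 ≤ G.degree v ∨ ∃ k, G.Adj v k ∧ 2 ≤ G.degree k := by
  classical
  refine or_iff_not_imp_left.2 fun hv => ?_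
  obtain ⟨u, -, hu⟩ := Finset.exists_mem_notMem_of_card_lt_card
    (s := insert v (G.neighborFinset v)) (t := Finset.univ) (by
      have := Finset.card_insert_le v (G.neighborFinset v)
      rw [card_neighborFinset_eq_degree] at this
      rw [Finset.card_univ]
      omega)
  simp only [Finset.mem_insert, mem_neighborFinset, not_or] at hu
  obtain ⟨p, hp, hpl⟩ := hG.exists_path_of_dist v u
  have := hG.one_lt_dist_of_ne_of_not_adj (Ne.symm hu.1) hu.2
  refine ⟨p.getVert 1, ?_, hp.two_le_degree_getVert one_pos (by omega)⟩
  simpa using p.adj_getVert_succ (i := 0) (by omega)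

theorem Connected.eq_or_adj_of_two_le_degree (hG : G.Connected)
    (hdeg : ∀ a b c, G.Adj a b → G.Adj b c → a ≠ c → G.degree a ≤ 1 ∨ G.degree c ≤ 1)
    {u v : V} (hu : 2 ≤ G.degree u) (hv : 2 ≤ G.degree v) : u = v ∨ G.Adj u v := by
  by_contra! h
  obtain ⟨p, hp, hpl⟩ := hG.exists_path_of_dist u v
  have := hG.one_lt_dist_of_ne_of_not_adj h.1 h.2
  have h₂ : 2 ≤ G.degree (p.getVert 2) := by
    rcases (show 2 = p.length ∨ 2 < p.length by omega) with hl | hl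
    · rwa [show p.getVert 2 = v by rw [hl, p.getVert_length]]
    · exact hp.two_le_degree_getVert two_pos hl
  have hne : p.getVert 0 ≠ p.getVert 2 := fun he => by
    have := hp.getVert_injOn (by simp only [Set.mem_ofPred_eq]; omega)
      (by simp only [Set.mem_ofPred_eq]; omega) he
    omega
  rw [p.getVert_zero] at hne
  have h₀₁ := p.adj_getVert_succ (i := 0) (by omega)
  rw [p.getVert_zero] at h₀₁
  have := hdeg _ _ _ h₀₁ (p.adj_getVert_succ (i := 1) (by omega)) hne
  simp only [Nat.reduceAdd] at this
  omega

theorem Connected.isStarWithAtLeastTwoLeaves_of_forall_two_le_degree (hG : G.Connected)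
    (h3 : 3 ≤ Fintype.card V) {c : V} (hc : ∀ v, 2 ≤ G.degree v → v = c) :
    G.IsStarWithAtLeastTwoLeaves := by
  have hadj : ∀ v, v ≠ c → G.Adj v c := by
    intro v hv
    rcases hG.two_le_degree_or_exists_adj h3 v with h | ⟨k, hk, h⟩
    · exact absurd (hc v h) hv
    · rwa [← hc k h]
  refine ⟨h3, c, fun u v => ⟨fun huv => ?_, ?_⟩⟩
  · by_cases hu : u = c
    · exact Or.inl ⟨hu, fun hv => huv.ne (hu.trans hv.symm)⟩
    by_cases hv : v = c
    · exact Or.inr ⟨hv, hu⟩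
    · exact absurd (hc u (two_le_degree_of_adj_of_adj (hadj u hu) huv (Ne.symm hv))) hu
  · rintro (⟨rfl, hv⟩ | ⟨rfl, hu⟩)
    exacts [(hadj v hv).symm, hadj u hu]

theorem Connected.isBalancedDoubleStar_of_adj (hG : G.Connected) (h3 : 3 ≤ Fintype.card V)
    (hdeg : ∀ a b c, G.Adj a b → G.Adj b c → a ≠ c → G.degree a ≤ 1 ∨ G.degree c ≤ 1)
    {c₁ c₂ : V} (h12 : G.Adj c₁ c₂) (h₁ : 2 ≤ G.degree c₁) (h₂ : 2 ≤ G.degree c₂)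
    (hs : G.status c₁ = G.status c₂) : G.IsBalancedDoubleStar := by
  have hK : ∀ k, 2 ≤ G.degree k → k = c₁ ∨ k = c₂ := by
    intro k hk
    by_contra! hk'
    have hk₁ := (hG.eq_or_adj_of_two_le_degree hdeg hk h₁).resolve_left hk'.1
    have := hdeg k c₁ c₂ hk₁ h12 hk'.2
    omega
  have hleaf : ∀ v, v ≠ c₁ → v ≠ c₂ → G.degree v ≤ 1 ∧ (G.Adj c₁ v ∨ G.Adj c₂ v) := by
    intro v hv₁ hv₂
    have hv : G.degree v ≤ 1 := by
      by_contra! hv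
      rcases hK v (by omega) with h | h <;> contradiction
    refine ⟨hv, ?_⟩
    rcases hG.two_le_degree_or_exists_adj h3 v with h | ⟨k, hk, h⟩
    · omega
    · rcases hK k h with rfl | rfl
      exacts [Or.inl hk.symm, Or.inr hk.symm]
  refine ⟨c₁, c₂, h12.ne, h12, fun v hv₁ hv₂ => ?_, ?_, h₁⟩
  · obtain ⟨hv, hadj⟩ := hleaf v hv₁ hv₂
    have hnot : ¬(G.Adj c₁ v ∧ G.Adj c₂ v) := fun h => by
      have := two_le_degree_of_adj_of_adj h.1.symm h.2.symm h12.ne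
      omega
    have : 0 < G.degree v :=
      (G.degree_pos_iff_exists_adj v).2 (hadj.elim (⟨c₁, ·.symm⟩) (⟨c₂, ·.symm⟩))
    exact ⟨by tauto, by omega⟩
  · have hside : ∀ w, w ≠ c₁ → w ≠ c₂ → G.Adj c₁ w ∨ G.Adj c₂ w :=
      fun w hw₁ hw₂ => (hleaf w hw₁ hw₂).2
    have e₁ := hG.status_add_degree_add_two (dist_le_two_of_forall_adj_or_adj h12 hside)
    have e₂ := hG.status_add_degree_add_two
      (dist_le_two_of_forall_adj_or_adj h12.symm fun w hw₂ hw₁ => (hside w hw₁ hw₂).symm)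
    omega

theorem IsTree.isStarWithAtLeastTwoLeaves_or_isBalancedDoubleStar (hT : G.IsTree) {A B : ℕ}
    (hs : ∀ v, G.status v = A ∨ G.status v = B) (h3 : 3 ≤ Fintype.card V) :
    G.IsStarWithAtLeastTwoLeaves ∨ G.IsBalancedDoubleStar := by
  have hdeg a b c := hT.degree_le_one_or_of_adj_of_adj hs (a := a) (b := b) (c := c)
  obtain ⟨c, hc⟩ : ∃ c, 2 ≤ G.degree c := by
    obtain ⟨v⟩ := hT.connected.nonempty
    rcases hT.connected.two_le_degree_or_exists_adj h3 v with h | ⟨k, -, h⟩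
    exacts [⟨v, h⟩, ⟨k, h⟩]
  by_cases hK : ∀ v, 2 ≤ G.degree v → v = c
  · exact Or.inl (hT.connected.isStarWithAtLeastTwoLeaves_of_forall_two_le_degree h3 hK)
  push Not at hK
  obtain ⟨c', hc', hne⟩ := hK
  have h12 := (hT.connected.eq_or_adj_of_two_le_degree hdeg hc hc').resolve_left hne.symm
  exact Or.inr (hT.connected.isBalancedDoubleStar_of_adj h3 hdeg h12 hc hc'
    (hT.status_eq_of_adj_of_two_le_degree hs h12 hc hc'))

end Degree

end SimpleGraph

/-- A finite tree `T` has exactly two distinct status values if and only if `T` is a star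
`K_{1,t}` with `t ≥ 2` leaves or a balanced double star. -/
theorem numStatusValues_eq_two_iff {V : Type*} [Fintype V]
    (G : SimpleGraph V) [DecidableRel G.Adj] (hT : G.IsTree) :
    G.numStatusValues = 2 ↔
      G.IsStarWithAtLeastTwoLeaves ∨ G.IsBalancedDoubleStar := by
  constructor
  · intro h
    obtain ⟨A, B, hAB, hrange⟩ := (Finset.card_image_univ_eq_two_iff G.status).1 h
    have hs : ∀ v, G.status v = A ∨ G.status v = B := fun v => hrange.subset ⟨v, rfl⟩
    obtain ⟨⟨u, hu⟩, ⟨v, hv⟩⟩ : A ∈ Set.range G.status ∧ B ∈ Set.range G.status := by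
      simp [hrange]
    exact hT.isStarWithAtLeastTwoLeaves_or_isBalancedDoubleStar hs
      (G.three_le_card_of_status_ne (u := u) (v := v) (by rwa [hu, hv]))
  · rintro (h | h)
    exacts [h.numStatusValues_eq_two hT.connected, h.numStatusValues_eq_two hT.connected]
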